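/- arXiv:2209.07104 — 6 statements merged into one kernel-verified Lean document; each statement's English description precedes it below -/
import Mathlib

section
/- Suppose D ∈ ℝ^{p×q} has full column rank q and B = AMD where M = (CᵀC)⁻¹Cᵀ and C has full column rank. Then for every z ∈ ℂ with z ≠ 0, the matrix [[zIₙ − A, −B], [C, D]] has rank n + q. In particular the system is minimum phase (rank n + q for all |z| ≥ 1). -/
/-!
Full column rank of `C` makes `M = (CᵀC)⁻¹Cᵀ` a left inverse of `C`. For `(x, u)` in the kernel of
the Rosenbrock matrix, applying `M` to `C x + D u = 0` gives `x = -M D u`, hence `A x = -A M D u = -B u`,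
and the first block row collapses to `z x = 0`. So `x = 0` when `z ≠ 0`, then `D u = 0` forces
`u = 0`; this uses injectivity of `D` over `ℂ`, which holds because the real matrix
`(DᵀD)⁻¹Dᵀ` is a left inverse of `D`. The kernel being trivial, the `n + q` columns are independent.
-/

open Matrix

namespace Matrix

variable {K : Type*} {l m n r : Type*}

theorem mulVec_injective_iff_rank_eq_card [Field K] [Fintype n] {A : Matrix m n K} :
    Function.Injective A.mulVec ↔ A.rank = Fintype.card n := by
  rw [mulVec_injective_iff, linearIndependent_iff_card_eq_finrank_span, rank_eq_finrank_span_cols,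
    Set.finrank, eq_comm]

theorem mulVec_injective_of_mul_eq_one [CommSemiring K] [Fintype m] [Fintype n] [DecidableEq n]
    {L : Matrix n m K} {A : Matrix m n K} (h : L * A = 1) : Function.Injective A.mulVec :=
  Function.LeftInverse.injective (g := L.mulVec) fun x => by
    rw [mulVec_mulVec, h, one_mulVec]

theorem nonsing_inv_transpose_mul_self_mul_transpose_mul_self [Field K] [LinearOrder K]
    [IsStrictOrderedRing K] [Fintype m] [Fintype n] [DecidableEq n] {A : Matrix m n K}
    (hA : Function.Injective A.mulVec) : (Aᵀ * A)⁻¹ * Aᵀ * A = 1 := by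
  have hAA : Function.Injective (Aᵀ * A).mulVec := by
    rw [← coe_mulVecLin, ← LinearMap.ker_eq_bot, ker_mulVecLin_transpose_mul_self,
      LinearMap.ker_eq_bot, coe_mulVecLin]
    exact hA
  rw [Matrix.mul_assoc, nonsing_inv_mul _ ((isUnit_iff_isUnit_det _).mp
    (mulVec_injective_iff_isUnit.mp hAA))]

theorem mulVec_fromBlocks_injective [CommRing K] [NoZeroDivisors K] [Fintype m] [Fintype l]
    [Fintype r] [DecidableEq m] {A : Matrix m m K} {C : Matrix r m K} {D : Matrix r l K}
    {M : Matrix m r K} (hMC : M * C = 1) (hD : Function.Injective D.mulVec) {z : K} (hz : z ≠ 0) :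
    Function.Injective (fromBlocks (z • 1 - A) (-(A * M * D)) C D).mulVec := by
  rw [← coe_mulVecLin, injective_iff_map_eq_zero]
  intro v hv
  obtain ⟨x, u, rfl⟩ : ∃ x u, v = Sum.elim x u := ⟨_, _, (Sum.elim_comp_inl_inr v).symm⟩
  rw [coe_mulVecLin, fromBlocks_mulVec, Sum.elim_comp_inl, Sum.elim_comp_inr, ← Sum.elim_zero_zero,
    Sum.elim_eq_iff] at hv
  obtain ⟨hstate, houtput⟩ := hv
  have hx : x = -((M * D) *ᵥ u) := by
    have := congrArg M.mulVec houtput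
    simp only [mulVec_add, mulVec_mulVec, hMC, one_mulVec, mulVec_zero] at this
    exact eq_neg_of_add_eq_zero_left this
  have hAx : A *ᵥ x = -((A * M * D) *ᵥ u) := by
    rw [hx, mulVec_neg, mulVec_mulVec, Matrix.mul_assoc]
  have hzx : z • x = 0 := by
    rwa [sub_mulVec, neg_mulVec, smul_mulVec, one_mulVec, ← hAx, sub_add_cancel] at hstate
  have hx0 : x = 0 := (smul_eq_zero.mp hzx).resolve_left hz
  have hu0 : u = 0 := hD (by rwa [hx0, mulVec_zero, zero_add, ← mulVec_zero D] at houtput)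
  rw [hx0, hu0, Sum.elim_zero_zero]

end Matrix

theorem Complex.map_ofReal_mul {l m n : Type*} [Fintype m] (X : Matrix l m ℝ) (Y : Matrix m n ℝ) :
    (X * Y).map Complex.ofReal = X.map Complex.ofReal * Y.map Complex.ofReal :=
  Matrix.map_mul (f := Complex.ofRealHom)

/-- Case (c): if `D` has full column rank `q`, `C` has full column rank, and
`B = AMD` with `M = (CᵀC)⁻¹Cᵀ`, then the Rosenbrock matrix
`[[zI − A, −B],[C, D]]` has rank `n + q` for every nonzero `z ∈ ℂ`;
in particular the minimum phase condition (for `|z| ≥ 1`) holds. -/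
theorem stmt_5 {n p q : ℕ}
    (A : Matrix (Fin n) (Fin n) ℝ) (B : Matrix (Fin n) (Fin q) ℝ)
    (C : Matrix (Fin p) (Fin n) ℝ) (D : Matrix (Fin p) (Fin q) ℝ)
    (hC : C.rank = n) (hD : D.rank = q)
    (M : Matrix (Fin n) (Fin p) ℝ) (hM : M = (Cᵀ * C)⁻¹ * Cᵀ)
    (hB : B = A * M * D) :
    (∀ z : ℂ, z ≠ 0 →
      (Matrix.fromBlocks
        (z • (1 : Matrix (Fin n) (Fin n) ℂ) - A.map (Complex.ofReal))
        (-(B.map (Complex.ofReal)))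
        (C.map (Complex.ofReal)) (D.map (Complex.ofReal))).rank = n + q) ∧
    (∀ z : ℂ, 1 ≤ ‖z‖ →
      (Matrix.fromBlocks
        (z • (1 : Matrix (Fin n) (Fin n) ℂ) - A.map (Complex.ofReal))
        (-(B.map (Complex.ofReal)))
        (C.map (Complex.ofReal)) (D.map (Complex.ofReal))).rank = n + q) := by
  have hMC : M.map Complex.ofReal * C.map Complex.ofReal = 1 := by
    rw [← Complex.map_ofReal_mul, hM, nonsing_inv_transpose_mul_self_mul_transpose_mul_self
      (mulVec_injective_iff_rank_eq_card.mpr (by simpa using hC))]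
    simp
  have hDinj : Function.Injective (D.map Complex.ofReal).mulVec := by
    refine mulVec_injective_of_mul_eq_one (L := ((Dᵀ * D)⁻¹ * Dᵀ).map Complex.ofReal) ?_
    rw [← Complex.map_ofReal_mul, nonsing_inv_transpose_mul_self_mul_transpose_mul_self
      (mulVec_injective_iff_rank_eq_card.mpr (by simpa using hD))]
    simp
  have hrank (z : ℂ) (hz : z ≠ 0) :
      (Matrix.fromBlocks
        (z • (1 : Matrix (Fin n) (Fin n) ℂ) - A.map (Complex.ofReal))
        (-(B.map (Complex.ofReal)))
        (C.map (Complex.ofReal)) (D.map (Complex.ofReal))).rank = n + q := by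
    rw [hB, Complex.map_ofReal_mul, Complex.map_ofReal_mul,
      mulVec_injective_iff_rank_eq_card.mp (mulVec_fromBlocks_injective hMC hDinj hz)]
    simp
  exact ⟨hrank, fun z hz => hrank z (norm_pos_iff.mp (by linarith))⟩
end

section
/- Suppose C ∈ ℝ^{p×n} has full column rank and D ∈ ℝ^{p×q} has full column rank. Then the rank-matching condition holds: rank([[CB, D],[D, 0]]) = rank(D) + rank([[B],[D]]). -/
open Matrix

lemma aux_rank_eq_card {m r : Type*} [Fintype m] [Fintype r] [DecidableEq r]
    (A : Matrix m r ℝ) (h : LinearMap.ker A.mulVecLin = ⊥) :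
    A.rank = Fintype.card r := by
  have h2 := LinearMap.finrank_range_add_finrank_ker A.mulVecLin
  rw [h, finrank_bot, add_zero, Module.finrank_fintype_fun_eq_card] at h2
  rw [Matrix.rank, h2]

lemma aux_ker_eq_bot {m r : Type*} [Fintype m] [Fintype r] [DecidableEq r]
    (A : Matrix m r ℝ) (h : A.rank = Fintype.card r) :
    LinearMap.ker A.mulVecLin = ⊥ := by
  have h2 := LinearMap.finrank_range_add_finrank_ker A.mulVecLin
  rw [Module.finrank_fintype_fun_eq_card, ← h, Matrix.rank] at h2
  have : Module.finrank ℝ (LinearMap.ker A.mulVecLin) = 0 := by omega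
  exact Submodule.finrank_eq_zero.mp this

/-- If `C` and `D` both have full column rank, the rank-matching condition holds:
`rank([[CB, D],[D, 0]]) = rank D + rank([[B],[D]])`. -/
theorem stmt_6 {n p q : ℕ}
    (B : Matrix (Fin n) (Fin q) ℝ) (C : Matrix (Fin p) (Fin n) ℝ)
    (D : Matrix (Fin p) (Fin q) ℝ)
    (hC : C.rank = n) (hD : D.rank = q) :
    (Matrix.fromBlocks (C * B) D D (0 : Matrix (Fin p) (Fin q) ℝ)).rank =
      D.rank + (Matrix.fromRows B D).rank := by
  have hDker : LinearMap.ker D.mulVecLin = ⊥ := by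
    apply aux_ker_eq_bot; simpa using hD
  have hDinj : ∀ x : Fin q → ℝ, D *ᵥ x = 0 → x = 0 := by
    intro x hx
    have := hDker ▸ (LinearMap.mem_ker.mpr (show D.mulVecLin x = 0 from hx))
    simpa using this
  have hRows : (Matrix.fromRows B D).rank = q := by
    have := aux_rank_eq_card (Matrix.fromRows B D) ?_
    · simpa using this
    · rw [LinearMap.ker_eq_bot']
      intro x hx
      have hx' : Matrix.fromRows B D *ᵥ x = 0 := hx
      rw [fromRows_mulVec] at hx'
      exact hDinj x (funext fun i => congrFun hx' (Sum.inr i))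
  have hBlocks : (Matrix.fromBlocks (C * B) D D (0 : Matrix (Fin p) (Fin q) ℝ)).rank = q + q := by
    have := aux_rank_eq_card (Matrix.fromBlocks (C * B) D D (0 : Matrix (Fin p) (Fin q) ℝ)) ?_
    · simpa using this
    · rw [LinearMap.ker_eq_bot']
      intro x hx
      have hx' : Matrix.fromBlocks (C * B) D D (0 : Matrix (Fin p) (Fin q) ℝ) *ᵥ x = 0 := hx
      rw [fromBlocks_mulVec] at hx'
      have h2 : D *ᵥ (x ∘ Sum.inl) + (0 : Matrix (Fin p) (Fin q) ℝ) *ᵥ (x ∘ Sum.inr) = 0 :=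
        funext fun i => congrFun hx' (Sum.inr i)
      have h2' : D *ᵥ (x ∘ Sum.inl) = 0 := by simpa using h2
      have hl : x ∘ Sum.inl = 0 := hDinj _ h2'
      have h1 : (C * B) *ᵥ (x ∘ Sum.inl) + D *ᵥ (x ∘ Sum.inr) = 0 :=
        funext fun i => congrFun hx' (Sum.inl i)
      rw [hl] at h1
      have h1' : D *ᵥ (x ∘ Sum.inr) = 0 := by simpa using h1
      have hr : x ∘ Sum.inr = 0 := hDinj _ h1'
      funext i
      cases i with
      | inl i => exact congrFun hl i
      | inr i => exact congrFun hr i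
  rw [hBlocks, hRows, hD]
end

section
/- Suppose C ∈ ℝ^{p×n} and B ∈ ℝ^{n×q} both have full column rank and D = 0. Then rank([[zIₙ − A, −B],[C, 0]]) = n + q for all z ∈ ℂ with z ≠ 0, i.e., the minimum phase condition (for |z| ≥ 1) holds. -/
open Matrix

lemma rank_helper {K : Type*} [Field K] {m k : Type*} [Fintype m] [Fintype k]
    (M : Matrix m k K) : M.rank = Fintype.card k ↔ Function.Injective M.mulVec := by
  have h := LinearMap.finrank_range_add_finrank_ker M.mulVecLin
  rw [Module.finrank_fintype_fun_eq_card] at h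
  constructor
  · intro hr
    have : Module.finrank K (LinearMap.ker M.mulVecLin) = 0 := by
      have : M.rank = Module.finrank K (LinearMap.range M.mulVecLin) := rfl
      omega
    have hk : LinearMap.ker M.mulVecLin = ⊥ :=
      Submodule.finrank_eq_zero.mp this
    exact (LinearMap.ker_eq_bot.mp hk :)
  · intro hinj
    have hk : LinearMap.ker M.mulVecLin = ⊥ := LinearMap.ker_eq_bot.mpr hinj
    have : Module.finrank K (LinearMap.ker M.mulVecLin) = 0 := by
      rw [hk]; simp
    have hr : M.rank = Module.finrank K (LinearMap.range M.mulVecLin) := rfl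
    omega

lemma complex_inj {a b : ℕ} (M : Matrix (Fin a) (Fin b) ℝ) (hM : M.rank = b)
    (x : Fin b → ℂ) (hx : M.map Complex.ofReal *ᵥ x = 0) : x = 0 := by
  have hinj : Function.Injective M.mulVec := by
    rw [← rank_helper]; simpa using hM
  have hre : M *ᵥ (fun j => (x j).re) = 0 := by
    funext i
    have := congrFun hx i
    simp only [mulVec, dotProduct, map_apply, Pi.zero_apply] at this ⊢
    have := congrArg Complex.re this
    simpa [Complex.re_ofReal_mul] using this
  have him : M *ᵥ (fun j => (x j).im) = 0 := by
    funext i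
    have := congrFun hx i
    simp only [mulVec, dotProduct, map_apply, Pi.zero_apply] at this ⊢
    have := congrArg Complex.im this
    simpa [Complex.im_ofReal_mul] using this
  have h1 : (fun j => (x j).re) = 0 := by
    apply hinj; rw [hre]; simp [mulVec_zero]
  have h2 : (fun j => (x j).im) = 0 := by
    apply hinj; rw [him]; simp [mulVec_zero]
  funext j
  exact Complex.ext (congrFun h1 j) (congrFun h2 j)

/-- Case (b): if `C` and `B` have full column rank and `D = 0`, then
`rank([[zI − A, −B],[C, 0]]) = n + q` for all nonzero `z ∈ ℂ`;
in particular the minimum phase condition (for `|z| ≥ 1`) holds. -/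
theorem stmt_7 {n p q : ℕ}
    (A : Matrix (Fin n) (Fin n) ℝ) (B : Matrix (Fin n) (Fin q) ℝ)
    (C : Matrix (Fin p) (Fin n) ℝ)
    (hB : B.rank = q) (hC : C.rank = n) :
    ∀ z : ℂ, z ≠ 0 →
      (Matrix.fromBlocks
        (z • (1 : Matrix (Fin n) (Fin n) ℂ) - A.map (Complex.ofReal))
        (-(B.map (Complex.ofReal)))
        (C.map (Complex.ofReal)) (0 : Matrix (Fin p) (Fin q) ℂ)).rank = n + q := by
  intro z hz
  have : (n + q) = Fintype.card (Fin n ⊕ Fin q) := by simp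
  rw [this, rank_helper]
  set M := (Matrix.fromBlocks
        (z • (1 : Matrix (Fin n) (Fin n) ℂ) - A.map (Complex.ofReal))
        (-(B.map (Complex.ofReal)))
        (C.map (Complex.ofReal)) (0 : Matrix (Fin p) (Fin q) ℂ)) with hM
  have : LinearMap.ker M.mulVecLin = ⊥ := by
    rw [LinearMap.ker_eq_bot']
    intro v hv
    rw [mulVecLin_apply, hM, fromBlocks_mulVec] at hv
    have hbot : C.map Complex.ofReal *ᵥ (v ∘ Sum.inl)
        + (0 : Matrix (Fin p) (Fin q) ℂ) *ᵥ (v ∘ Sum.inr) = 0 := by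
      funext i; exact congrFun hv (Sum.inr i)
    rw [zero_mulVec, add_zero] at hbot
    have hx : (v ∘ Sum.inl) = 0 := complex_inj C hC _ hbot
    have htop : (z • (1 : Matrix (Fin n) (Fin n) ℂ) - A.map Complex.ofReal) *ᵥ (v ∘ Sum.inl)
        + (-(B.map Complex.ofReal)) *ᵥ (v ∘ Sum.inr) = 0 := by
      funext i; exact congrFun hv (Sum.inl i)
    rw [hx, mulVec_zero, zero_add, neg_mulVec, neg_eq_zero] at htop
    have hu : (v ∘ Sum.inr) = 0 := complex_inj B hB _ htop
    funext i
    cases i with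
    | inl i => exact congrFun hx i
    | inr i => exact congrFun hu i
  exact LinearMap.ker_eq_bot.mp this
end

section
/- Suppose there exists a nonzero vector h ∈ ℝ^p with Kh = 0 and KCAMh = 0 (i.e., the stacked matrix K_M = [[K],[KCAM]] is not of full column rank). Then setting R = hhᵀ and Q = 0 gives a nonzero pair satisfying KCGQ(KCG)ᵀ + KRKᵀ + KCAMR(KCAM)ᵀ = 0 and KCAMRKᵀ = 0; hence the joint identification matrix A is not injective. -/
open Matrix

lemma aux_outer_ne {p : ℕ} (h : Matrix (Fin p) (Fin 1) ℝ) (hne : h ≠ 0) :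
    h * hᵀ ≠ 0 := by
  intro hz
  apply hne
  ext i j
  have := congrFun (congrFun hz i) i
  simp [Matrix.mul_apply, Fin.sum_univ_succ] at this
  have : h i 0 = 0 := by nlinarith
  have hj : j = 0 := Subsingleton.elim j 0
  simpa [hj] using this

/-- If a nonzero `h` satisfies `Kh = 0` and `KCAMh = 0` (so `K_M = [[K],[KCAM]]`
is not of full column rank), then `R = hhᵀ`, `Q = 0` is a nonzero pair with
`KCG Q (KCG)ᵀ + K R Kᵀ + KCAM R (KCAM)ᵀ = 0` and `KCAM R Kᵀ = 0`;
hence the joint identification map is not injective. -/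
theorem stmt_12 {r p n g : ℕ}
    (K : Matrix (Fin r) (Fin p) ℝ) (C : Matrix (Fin p) (Fin n) ℝ)
    (A : Matrix (Fin n) (Fin n) ℝ) (G : Matrix (Fin n) (Fin g) ℝ)
    (M : Matrix (Fin n) (Fin p) ℝ) (hM : M = (Cᵀ * C)⁻¹ * Cᵀ)
    (h : Matrix (Fin p) (Fin 1) ℝ) (hne : h ≠ 0)
    (h1 : K * h = 0) (h2 : K * C * A * M * h = 0)
    (Q : Matrix (Fin g) (Fin g) ℝ) (R : Matrix (Fin p) (Fin p) ℝ)
    (hQ : Q = 0) (hR : R = h * hᵀ) :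
    (Q, R) ≠ (0, 0) ∧
    (K * C * G) * Q * (K * C * G)ᵀ + K * R * Kᵀ +
      (K * C * A * M) * R * (K * C * A * M)ᵀ = 0 ∧
    (K * C * A * M) * R * Kᵀ = 0 := by
  subst hQ hR
  refine ⟨fun hc => aux_outer_ne h hne (congrArg Prod.snd hc), ?_, ?_⟩
  · have e1 : K * (h * hᵀ) * Kᵀ = (K * h) * (K * h)ᵀ := by
      simp only [Matrix.transpose_mul, Matrix.mul_assoc]
    have e2 : (K * C * A * M) * (h * hᵀ) * (K * C * A * M)ᵀ
        = (K * C * A * M * h) * (K * C * A * M * h)ᵀ := by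
      simp only [Matrix.transpose_mul, Matrix.mul_assoc]
    rw [e1, e2, h1, h2]; simp
  · have : (K * C * A * M) * (h * hᵀ) * Kᵀ = (K * C * A * M * h) * (K * h)ᵀ := by
      simp only [Matrix.transpose_mul, Matrix.mul_assoc]
    rw [this, h2]; simp
end

section
/- Suppose there exists a nonzero vector e ∈ ℝ^g with KCGe = 0. Then with Q = eeᵀ and R = 0, the pair (Q, R) is nonzero and maps to zero under the joint identification map A of the measurement difference approach; hence rank(KCG) = g is necessary for unique joint identifiability of Q and R. -/
open Matrix

/-- If a nonzero `e` satisfies `KCGe = 0`, then `Q = eeᵀ`, `R = 0` is a nonzero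
pair mapped to zero by the joint identification map; hence `rank(KCG) = g` is
necessary for unique joint identifiability of `Q` and `R`. -/
theorem stmt_13 {r p n g : ℕ}
    (K : Matrix (Fin r) (Fin p) ℝ) (C : Matrix (Fin p) (Fin n) ℝ)
    (A : Matrix (Fin n) (Fin n) ℝ) (G : Matrix (Fin n) (Fin g) ℝ)
    (M : Matrix (Fin n) (Fin p) ℝ) (hM : M = (Cᵀ * C)⁻¹ * Cᵀ)
    (e : Matrix (Fin g) (Fin 1) ℝ) (hne : e ≠ 0)
    (h1 : K * C * G * e = 0)
    (Q : Matrix (Fin g) (Fin g) ℝ) (R : Matrix (Fin p) (Fin p) ℝ)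
    (hQ : Q = e * eᵀ) (hR : R = 0) :
    (Q, R) ≠ (0, 0) ∧
    (K * C * G) * Q * (K * C * G)ᵀ + K * R * Kᵀ +
      (K * C * A * M) * R * (K * C * A * M)ᵀ = 0 ∧
    -((K * C * A * M) * R * Kᵀ) = 0 := by
  refine ⟨?_, ?_, ?_⟩
  · intro h
    apply hne
    have hQ0 : Q = 0 := congrArg Prod.fst h
    rw [hQ] at hQ0
    ext i j
    have := congrFun (congrFun hQ0 i) i
    simp [Matrix.mul_apply, Fin.sum_univ_succ, Matrix.transpose_apply] at this
    have hi : e i 0 = 0 := by nlinarith [sq_nonneg (e i 0)]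
    fin_cases j
    simpa using hi
  · have : (K * C * G) * Q * (K * C * G)ᵀ = (K * C * G * e) * (K * C * G * e)ᵀ := by
      rw [hQ]
      simp only [Matrix.transpose_mul, Matrix.mul_assoc]
    rw [this, h1, hR]
    simp
  · rw [hR]; simp
end

section
/- Let C ∈ ℝ^{p×n} have full column rank, B ∈ ℝ^{n×q}, G ∈ ℝ^{n×g}, and let K ∈ ℝ^{r×p} have row space equal to the left null space of CB (case b: D = 0). Then KCG has full column rank g if and only if rank([B, G]) = rank(B) + g. -/
/-!
Since `K` kills exactly the column space of `CB` and `C` is injective, the null space of `KC` is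
the column space `U` of `B`. With `W` the column space of `G`, rank–nullity for `KC` restricted to
`W` gives `rank (KCG) + dim (U ∩ W) = rank G`, while Grassmann's formula gives
`rank [B, G] + dim (U ∩ W) = rank B + rank G`. As `rank G ≤ g`, both conditions say
`rank G = g` and `U ∩ W = 0`.
-/

open Matrix Module

namespace Submodule

theorem finrank_map_add_finrank_inf_ker {R V W : Type*} [DivisionRing R] [AddCommGroup V]
    [Module R V] [FiniteDimensional R V] [AddCommGroup W] [Module R W]
    (f : V →ₗ[R] W) (S : Submodule R V) :
    finrank R (S.map f) + finrank R ↥(S ⊓ LinearMap.ker f) = finrank R S := by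
  have hS := LinearMap.finrank_range_add_finrank_ker (f.domRestrict S)
  rwa [LinearMap.range_domRestrict, LinearMap.ker_domRestrict,
    ← finrank_map_subtype_eq, map_comap_subtype] at hS

end Submodule

namespace Matrix

variable {R : Type*} {l m n o : Type*}

theorem range_mulVecLin_fromCols [CommSemiring R] [Fintype n] [Fintype o]
    (B : Matrix m n R) (G : Matrix m o R) :
    LinearMap.range (fromCols B G).mulVecLin =
      LinearMap.range B.mulVecLin ⊔ LinearMap.range G.mulVecLin := by
  simp only [range_mulVecLin, ← Submodule.span_union, ← Set.Sum.elim_range]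
  congr 2
  ext (j | j) i <;> rfl

variable [Field R]

theorem rank_fromCols_add_finrank_inf [Fintype n] [Fintype o]
    (B : Matrix m n R) (G : Matrix m o R) :
    (fromCols B G).rank + finrank R ↥(LinearMap.range B.mulVecLin ⊓ LinearMap.range G.mulVecLin)
      = B.rank + G.rank := by
  rw [rank, range_mulVecLin_fromCols]
  exact Submodule.finrank_sup_add_finrank_inf_eq _ _

theorem rank_mul_add_finrank_inf_ker [Fintype m] [Fintype o]
    (A : Matrix l m R) (G : Matrix m o R) :
    (A * G).rank + finrank R ↥(LinearMap.range G.mulVecLin ⊓ LinearMap.ker A.mulVecLin)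
      = G.rank := by
  rw [rank, mulVecLin_mul, LinearMap.range_comp]
  exact Submodule.finrank_map_add_finrank_inf_ker _ _

theorem ker_mulVecLin_eq_bot_of_rank_eq [Fintype n] (A : Matrix m n R)
    (hA : A.rank = Fintype.card n) :
    LinearMap.ker A.mulVecLin = ⊥ := by
  have hrn := LinearMap.finrank_range_add_finrank_ker A.mulVecLin
  rw [finrank_fintype_fun_eq_card, ← rank, hA, Nat.add_eq_left] at hrn
  exact Submodule.finrank_eq_zero.mp hrn

theorem mul_eq_zero_of_range_vecMulLinear_le_ker [Fintype l] [DecidableEq l] [Fintype m]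
    {K : Matrix l m R} {M : Matrix m n R}
    (h : LinearMap.range K.vecMulLinear ≤ LinearMap.ker M.vecMulLinear) : K * M = 0 := by
  ext i j
  have hKi : K i ∈ LinearMap.range K.vecMulLinear := ⟨Pi.single i 1, by simp [row]⟩
  exact congrFun (h hKi) j

theorem ker_mulVecLin_eq_range_of_range_vecMulLinear_eq_ker [Fintype l] [Fintype m] [Fintype n]
    {K : Matrix l m R} {M : Matrix m n R}
    (h : LinearMap.range K.vecMulLinear = LinearMap.ker M.vecMulLinear) :
    LinearMap.ker K.mulVecLin = LinearMap.range M.mulVecLin := by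
  classical
  have hKM : K * M = 0 := mul_eq_zero_of_range_vecMulLinear_le_ker h.le
  have hle : LinearMap.range M.mulVecLin ≤ LinearMap.ker K.mulVecLin := by
    rw [LinearMap.range_le_ker_iff, ← mulVecLin_mul, hKM, mulVecLin_zero]
  have hK := LinearMap.finrank_range_add_finrank_ker K.mulVecLin
  have hMt := LinearMap.finrank_range_add_finrank_ker Mᵀ.mulVecLin
  have hrank : K.rank = finrank R (LinearMap.ker Mᵀ.mulVecLin) := by
    rw [← rank_transpose, rank, mulVecLin_transpose, h, mulVecLin_transpose]
  rw [← rank, finrank_fintype_fun_eq_card] at hK hMt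
  rw [rank_transpose] at hMt
  -- both have dimension `card m - rank M`, since `rank K` is the dimension of `ker Mᵀ`
  refine (Submodule.eq_of_le_of_finrank_eq hle ?_).symm
  rw [← rank]
  omega

theorem ker_mulVecLin_mul_eq_range_of_range_vecMulLinear_eq_ker
    [Fintype l] [Fintype m] [Fintype n] [Fintype o]
    {K : Matrix l m R} {C : Matrix m n R} {B : Matrix n o R}
    (hC : LinearMap.ker C.mulVecLin = ⊥)
    (hK : LinearMap.range K.vecMulLinear = LinearMap.ker (C * B).vecMulLinear) :
    LinearMap.ker (K * C).mulVecLin = LinearMap.range B.mulVecLin := by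
  rw [mulVecLin_mul, LinearMap.ker_comp, ker_mulVecLin_eq_range_of_range_vecMulLinear_eq_ker hK,
    mulVecLin_mul, LinearMap.range_comp,
    Submodule.comap_map_eq_of_injective (LinearMap.ker_eq_bot.mp hC)]

end Matrix

/-- Case (b) (`D = 0`): with `C` of full column rank and `K` whose row space
equals the left null space of `CB`, `KCG` has full column rank `g` iff
`rank([B, G]) = rank B + g`. -/
theorem stmt_17 {p n g q r : ℕ}
    (C : Matrix (Fin p) (Fin n) ℝ) (B : Matrix (Fin n) (Fin q) ℝ)
    (G : Matrix (Fin n) (Fin g) ℝ) (hC : C.rank = n)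
    (K : Matrix (Fin r) (Fin p) ℝ)
    (hspan : LinearMap.range K.vecMulLinear = LinearMap.ker (C * B).vecMulLinear) :
    (K * C * G).rank = g ↔
      (Matrix.fromCols B G).rank = B.rank + g := by
  have hCinj : LinearMap.ker C.mulVecLin = ⊥ :=
    C.ker_mulVecLin_eq_bot_of_rank_eq (by rw [hC, Fintype.card_fin])
  have hKCG := rank_mul_add_finrank_inf_ker (K * C) G
  rw [ker_mulVecLin_mul_eq_range_of_range_vecMulLinear_eq_ker hCinj hspan, inf_comm] at hKCG
  have hBG := rank_fromCols_add_finrank_inf B G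
  have hG := rank_le_width G
  omega
end
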